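/- Let A be a complex unital Banach algebra, a, b ∈ A quasinilpotent, and λ a nonzero complex number. If ab = λba, then a + b is quasinilpotent. -/

import Mathlib

/-!
Up to exchanging `a` and `b` we may assume `b * a = μ • (a * b)` with `‖μ‖ ≤ 1`. Moving every `a`
in a word in `a` and `b` to the left then only multiplies the word by a scalar of norm at most
`1`, so `‖aᵏ‖ ≤ C rᵏ` and `‖bᵏ‖ ≤ D sᵏ` for all `k` give `‖(a + b)ⁿ‖ ≤ C D (r + s)ⁿ`.
Quasinilpotency means exactly that such bounds hold for every `r > 0`.
-/

open Filter Topology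

theorem tendsto_rpow_one_div_nhds_zero_iff {u : ℕ → ℝ} (hu : ∀ n, 0 ≤ u n) :
    Tendsto (fun n : ℕ => u n ^ (1 / (n : ℝ))) atTop (𝓝 0) ↔
      ∀ ε > 0, ∃ C, ∀ n, u n ≤ C * ε ^ n := by
  constructor
  · intro h ε hε
    have hev : ∀ᶠ n in atTop, u n / ε ^ n ≤ 1 := by
      filter_upwards [h.eventually (gt_mem_nhds hε), eventually_ne_atTop 0] with n hn hn0
      rw [div_le_one (pow_pos hε n)]
      calc u n = (u n ^ (1 / (n : ℝ))) ^ n := by rw [one_div, Real.rpow_inv_natCast_pow (hu n) hn0]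
        _ ≤ ε ^ n := pow_le_pow_left₀ (Real.rpow_nonneg (hu n) _) hn.le n
    obtain ⟨C, hC⟩ := (isBoundedUnder_of_eventually_le hev).bddAbove_range
    exact ⟨C, fun n => (div_le_iff₀ (pow_pos hε n)).1 (hC ⟨n, rfl⟩)⟩
  · intro h
    refine tendsto_order.2
      ⟨fun δ hδ => .of_forall fun n => hδ.trans_le (Real.rpow_nonneg (hu n) _), fun δ hδ => ?_⟩
    obtain ⟨C, hC⟩ := h (δ / 2) (half_pos hδ)
    have hC' : Tendsto (fun n : ℕ => max C 1 ^ (1 / (n : ℝ))) atTop (𝓝 1) := by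
      simpa [Function.comp_def] using
        (Real.continuousAt_const_rpow (b := 0) (by positivity)).tendsto.comp
          tendsto_one_div_atTop_nhds_zero_nat
    filter_upwards [hC'.eventually (gt_mem_nhds one_lt_two), eventually_ne_atTop 0] with n hn hn0
    calc u n ^ (1 / (n : ℝ)) ≤ (max C 1 * (δ / 2) ^ n) ^ (1 / (n : ℝ)) := by
          gcongr
          · exact hu n
          · exact (hC n).trans (by gcongr; exact le_max_left _ _)
      _ = max C 1 ^ (1 / (n : ℝ)) * (δ / 2) := by
          rw [Real.mul_rpow (by positivity) (by positivity), one_div,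
            Real.pow_rpow_inv_natCast (by positivity) hn0]
      _ < 2 * (δ / 2) := by gcongr
      _ = δ := by ring

def IsQuasinilpotent {A : Type*} [NormedRing A] (x : A) : Prop :=
  Tendsto (fun n : ℕ => ‖x ^ n‖ ^ (1 / (n : ℝ))) atTop (𝓝 0)

theorem isQuasinilpotent_iff_forall_norm_pow_le {A : Type*} [NormedRing A] {x : A} :
    IsQuasinilpotent x ↔ ∀ ε > 0, ∃ C, ∀ n, ‖x ^ n‖ ≤ C * ε ^ n :=
  tendsto_rpow_one_div_nhds_zero_iff fun _ => norm_nonneg _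

section SkewCommuting

variable {𝕜 A : Type*} [NormedField 𝕜] [NormedRing A] [NormedAlgebra 𝕜 A] {a b : A} {μ : 𝕜}

theorem norm_pow_mul_add_smul_pow_mul_pow_le (hμ : ‖μ‖ ≤ 1) (hba : b * a = μ • (a * b))
    {C D r s : ℝ} (ha : ∀ k, ‖a ^ k‖ ≤ C * r ^ k) (hb : ∀ k, ‖b ^ k‖ ≤ D * s ^ k) (n : ℕ) :
    ∀ ν : 𝕜, ‖ν‖ ≤ 1 → ∀ i j,
      ‖a ^ i * (a + ν • b) ^ n * b ^ j‖ ≤ C * D * r ^ i * s ^ j * (r + s) ^ n := by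
  -- `ν` absorbs the powers of `μ` produced when an `a` is moved left across `(a + ν • b) ^ n`.
  induction n with
  | zero =>
    intro ν _ i j
    calc ‖a ^ i * (a + ν • b) ^ 0 * b ^ j‖ ≤ ‖a ^ i‖ * ‖b ^ j‖ := by
          simpa using norm_mul_le (a ^ i) (b ^ j)
      _ ≤ C * r ^ i * (D * s ^ j) :=
          mul_le_mul (ha i) (hb j) (norm_nonneg _) ((norm_nonneg _).trans (ha i))
      _ = C * D * r ^ i * s ^ j * (r + s) ^ 0 := by ring
  | succ n ih =>
    intro ν hν i j
    have hsemi : SemiconjBy a (a + (ν * μ) • b) (a + ν • b) := by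
      simp only [SemiconjBy, mul_add, add_mul, mul_smul_comm, smul_mul_assoc, hba, smul_smul]
    have hsplit : a ^ i * (a + ν • b) ^ (n + 1) * b ^ j =
        a ^ (i + 1) * (a + (ν * μ) • b) ^ n * b ^ j +
          ν • (a ^ i * (a + ν • b) ^ n * b ^ (j + 1)) := by
      have hcomm : ∀ x, (a + ν • b) ^ n * (a * x) = a * ((a + (ν * μ) • b) ^ n * x) := fun x => by
        rw [← mul_assoc, ← (hsemi.pow_right n).eq, mul_assoc]
      rw [pow_succ (a + ν • b), pow_succ a, pow_succ' b]
      simp only [mul_add, add_mul, mul_smul_comm, smul_mul_assoc, mul_assoc, hcomm]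
    have hνμ : ‖ν * μ‖ ≤ 1 := by rw [norm_mul]; exact mul_le_one₀ hν (norm_nonneg _) hμ
    calc ‖a ^ i * (a + ν • b) ^ (n + 1) * b ^ j‖
        ≤ ‖a ^ (i + 1) * (a + (ν * μ) • b) ^ n * b ^ j‖ +
            ‖a ^ i * (a + ν • b) ^ n * b ^ (j + 1)‖ := by
          rw [hsplit]
          refine (norm_add_le _ _).trans ?_
          rw [norm_smul]
          gcongr
          exact mul_le_of_le_one_left (norm_nonneg _) hν
      _ ≤ C * D * r ^ (i + 1) * s ^ j * (r + s) ^ n + C * D * r ^ i * s ^ (j + 1) * (r + s) ^ n :=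
          add_le_add (ih _ hνμ _ _) (ih _ hν _ _)
      _ = C * D * r ^ i * s ^ j * (r + s) ^ (n + 1) := by ring

theorem norm_add_pow_le_of_mul_eq_smul_mul (hμ : ‖μ‖ ≤ 1) (hba : b * a = μ • (a * b))
    {C D r s : ℝ} (ha : ∀ k, ‖a ^ k‖ ≤ C * r ^ k) (hb : ∀ k, ‖b ^ k‖ ≤ D * s ^ k) (n : ℕ) :
    ‖(a + b) ^ n‖ ≤ C * D * (r + s) ^ n := by
  simpa using norm_pow_mul_add_smul_pow_mul_pow_le hμ hba ha hb n 1 (by simp) 0 0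

theorem IsQuasinilpotent.add_of_mul_eq_smul_mul (ha : IsQuasinilpotent a)
    (hb : IsQuasinilpotent b) (hμ : ‖μ‖ ≤ 1) (hba : b * a = μ • (a * b)) :
    IsQuasinilpotent (a + b) := by
  rw [isQuasinilpotent_iff_forall_norm_pow_le] at *
  intro ε hε
  obtain ⟨C, hC⟩ := ha (ε / 2) (half_pos hε)
  obtain ⟨D, hD⟩ := hb (ε / 2) (half_pos hε)
  exact ⟨C * D, fun n => by
    simpa only [add_halves] using norm_add_pow_le_of_mul_eq_smul_mul hμ hba hC hD n⟩

end SkewCommuting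

theorem add_quasinilpotent_of_commute_up_to_factor_general
    {𝔸 : Type*} [NormedRing 𝔸] [NormedAlgebra ℂ 𝔸]
    (a b : 𝔸) (lam : ℂ) (hlam : lam ≠ 0)
    (ha : Tendsto (fun n : ℕ => ‖a ^ n‖ ^ (1 / (n : ℝ))) atTop (nhds 0))
    (hb : Tendsto (fun n : ℕ => ‖b ^ n‖ ^ (1 / (n : ℝ))) atTop (nhds 0))
    (hab : a * b = lam • (b * a)) :
    Tendsto (fun n : ℕ => ‖(a + b) ^ n‖ ^ (1 / (n : ℝ))) atTop (nhds 0) := by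
  rcases le_total ‖lam‖ 1 with hle | hge
  · rw [add_comm]
    exact IsQuasinilpotent.add_of_mul_eq_smul_mul hb ha hle hab
  · have hba : b * a = lam⁻¹ • (a * b) := by
      rw [hab, smul_smul, inv_mul_cancel₀ hlam, one_smul]
    exact IsQuasinilpotent.add_of_mul_eq_smul_mul ha hb
      (by rw [norm_inv]; exact inv_le_one_of_one_le₀ hge) hba

/-- If `a` and `b` are quasinilpotent (`‖xⁿ‖^(1/n) → 0`) and
`a*b = λ • (b*a)` with `λ ≠ 0`, then `a + b` is quasinilpotent. -/
theorem add_quasinilpotent_of_commute_up_to_factor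
    {𝔸 : Type*} [NormedRing 𝔸] [NormedAlgebra ℂ 𝔸] [CompleteSpace 𝔸]
    (a b : 𝔸) (lam : ℂ) (hlam : lam ≠ 0)
    (ha : Tendsto (fun n : ℕ => ‖a ^ n‖ ^ (1 / (n : ℝ))) atTop (nhds 0))
    (hb : Tendsto (fun n : ℕ => ‖b ^ n‖ ^ (1 / (n : ℝ))) atTop (nhds 0))
    (hab : a * b = lam • (b * a)) :
    Tendsto (fun n : ℕ => ‖(a + b) ^ n‖ ^ (1 / (n : ℝ))) atTop (nhds 0) :=
  add_quasinilpotent_of_commute_up_to_factor_general a b lam hlam ha hb hab
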